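/- Let G = (V,E) be a connected graph on n ≥ 5 nodes and set c(G) = max{0, (3ρ_max(G) − 4ρ_avg(G))/(1 − 4/n)}. Then the point x̃ defined by x̃_{ij} = (ρ_G(i,j) + c(G)) / ((4/n²) Σ_{1≤k<l≤n} (ρ_G(k,l) + c(G))) for all 1 ≤ i < j ≤ n satisfies: (i) x̃_{ij} ≤ x̃_{ik} + x̃_{jk} for all distinct i,j,k; (ii) x̃_{ij} + x̃_{ik} + x̃_{jk} ≤ 2 for all 1 ≤ i < j < k ≤ n; and (iii) Σ_{1≤i<j≤n} x̃_{ij} = n²/4. That is, x̃ is a feasible point of the metric LP relaxation. -/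

import Mathlib

noncomputable section
open scoped Classical

/-- The sum of `f i j` over all unordered pairs `{i, j}` with `i < j`. -/
def pairSum (n : ℕ) (f : Fin n → Fin n → ℝ) : ℝ :=
  ∑ i : Fin n, ∑ j : Fin n, if i < j then f i j else 0

/-- The diameter `ρ_max(G)` of `G`: the maximum of the shortest-path distance over
all pairs of nodes. -/
def rhoMax {n : ℕ} (G : SimpleGraph (Fin n)) : ℕ :=
  (Finset.univ : Finset (Fin n × Fin n)).sup (fun p => G.dist p.1 p.2)

/-- The average distance `ρ_avg(G) = (2/n²) ∑_{i<j} ρ_G(i,j)` of `G`. -/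
def rhoAvg (n : ℕ) (G : SimpleGraph (Fin n)) : ℝ :=
  (2 / (n : ℝ) ^ 2) * pairSum n (fun i j => (G.dist i j : ℝ))

/-- The quantity `c(G) = max {0, (3ρ_max(G) - 4ρ_avg(G)) / (1 - 4/n)}`. -/
def cConst (n : ℕ) (G : SimpleGraph (Fin n)) : ℝ :=
  max 0 ((3 * (rhoMax G : ℝ) - 4 * rhoAvg n G) / (1 - 4 / (n : ℝ)))

/-- The point `x̃` built from the shortest-path metric of `G`:
`x̃_{ij} = (ρ_G(i,j) + c(G)) / ((4/n²) ∑_{k<l} (ρ_G(k,l) + c(G)))`. -/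
def xTilde (n : ℕ) (G : SimpleGraph (Fin n)) : Fin n → Fin n → ℝ :=
  fun i j => ((G.dist i j : ℝ) + cConst n G) /
    ((4 / (n : ℝ) ^ 2) * pairSum n (fun k l => (G.dist k l : ℝ) + cConst n G))

section pairSum

variable {n : ℕ}

lemma pairSum_add (f g : Fin n → Fin n → ℝ) :
    pairSum n (fun i j => f i j + g i j) = pairSum n f + pairSum n g := by
  simp only [pairSum, ← Finset.sum_add_distrib, ite_add_ite, add_zero]

lemma pairSum_div (f : Fin n → Fin n → ℝ) (D : ℝ) :
    pairSum n (fun i j => f i j / D) = pairSum n f / D := by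
  simp only [pairSum, Finset.sum_div, ite_div, zero_div]

lemma pairSum_nonneg {f : Fin n → Fin n → ℝ} (hf : ∀ i j, 0 ≤ f i j) : 0 ≤ pairSum n f :=
  Finset.sum_nonneg fun i _ => Finset.sum_nonneg fun j _ => ite_nonneg (hf i j) le_rfl

lemma pairSum_pos {f : Fin n → Fin n → ℝ} (hf : ∀ i j, 0 ≤ f i j) {i j : Fin n} (hij : i < j)
    (hpos : 0 < f i j) : 0 < pairSum n f := by
  have hterm : ∀ k l : Fin n, 0 ≤ if k < l then f k l else 0 := fun k l =>
    ite_nonneg (hf k l) le_rfl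
  refine Finset.sum_pos' (fun k _ => Finset.sum_nonneg fun l _ => hterm k l)
    ⟨i, Finset.mem_univ _, Finset.sum_pos' (fun l _ => hterm i l) ⟨j, Finset.mem_univ _, ?_⟩⟩
  rwa [if_pos hij]

/-- Every ordered pair of distinct indices is counted once by `i < j` and once by `j < i`. -/
lemma two_mul_pairSum_one : 2 * pairSum n (fun _ _ => 1) = (n : ℝ) ^ 2 - n := by
  have hpair : ∀ i j : Fin n, ((if i < j then (1 : ℝ) else 0) + if j < i then 1 else 0)
      = 1 - if i = j then 1 else 0 := fun i j => by
    rcases lt_trichotomy i j with h | rfl | h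
    · simp [h, h.ne, asymm h]
    · simp
    · simp [h, h.ne', asymm h]
  have hswap : pairSum n (fun _ _ => 1) = ∑ i : Fin n, ∑ j : Fin n, if j < i then 1 else 0 :=
    Finset.sum_comm
  calc 2 * pairSum n (fun _ _ => 1)
      = ∑ i : Fin n, ∑ j : Fin n, (((if i < j then (1 : ℝ) else 0) + if j < i then 1 else 0)) := by
        rw [two_mul]
        nth_rw 2 [hswap]
        simp only [pairSum, ← Finset.sum_add_distrib]
    _ = (n : ℝ) ^ 2 - n := by
        simp only [hpair, Finset.sum_sub_distrib, Finset.sum_ite_eq, Finset.mem_univ, if_true,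
          Finset.sum_const, Finset.card_univ, Fintype.card_fin, nsmul_eq_mul, mul_one]
        ring

lemma pairSum_const (c : ℝ) : pairSum n (fun _ _ => c) = c * (((n : ℝ) ^ 2 - n) / 2) := by
  have hc : pairSum n (fun _ _ => c) = c * pairSum n (fun _ _ => 1) := by
    simp only [pairSum, Finset.mul_sum, mul_ite, mul_one, mul_zero]
  rw [hc, ← two_mul_pairSum_one]
  ring

end pairSum

lemma dist_le_rhoMax {n : ℕ} (G : SimpleGraph (Fin n)) (i j : Fin n) : G.dist i j ≤ rhoMax G :=
  Finset.le_sup (f := fun p : Fin n × Fin n => G.dist p.1 p.2) (Finset.mem_univ (i, j))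

section xTilde

variable {n : ℕ} {G : SimpleGraph (Fin n)}

lemma cConst_nonneg : 0 ≤ cConst n G := le_max_left _ _

lemma three_mul_rhoMax_sub_le_cConst_mul (hn : 4 < n) :
    3 * (rhoMax G : ℝ) - 4 * rhoAvg n G ≤ cConst n G * (1 - 4 / (n : ℝ)) := by
  have hn' : (4 : ℝ) < n := by exact_mod_cast hn
  have hpos : (0 : ℝ) < 1 - 4 / n := by
    rw [sub_pos, div_lt_one (by linarith)]
    exact hn'
  exact (div_le_iff₀ hpos).mp (le_max_right _ _)

lemma xTilde_denom_nonneg :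
    0 ≤ (4 / (n : ℝ) ^ 2) * pairSum n (fun k l => (G.dist k l : ℝ) + cConst n G) :=
  mul_nonneg (by positivity) (pairSum_nonneg fun _ _ => by positivity [cConst_nonneg (G := G)])

lemma two_mul_xTilde_denom (hn : n ≠ 0) :
    2 * ((4 / (n : ℝ) ^ 2) * pairSum n (fun k l => (G.dist k l : ℝ) + cConst n G))
      = 4 * rhoAvg n G + 4 * cConst n G * (1 - 1 / n) := by
  rw [pairSum_add, pairSum_const, rhoAvg]
  field_simp

lemma xTilde_triangle (hG : G.Connected) (i j k : Fin n) :
    xTilde n G i j ≤ xTilde n G i k + xTilde n G j k := by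
  have hdist : (G.dist i j : ℝ) ≤ G.dist i k + G.dist j k := by
    rw [G.dist_comm (u := j)]
    exact_mod_cast hG.dist_triangle
  simp only [xTilde, ← add_div]
  exact div_le_div_of_nonneg_right (by linarith [cConst_nonneg (G := G)]) xTilde_denom_nonneg

/-- The choice of `c(G)` is exactly what makes `3 (ρ_max + c)` at most twice the normaliser. -/
lemma xTilde_perimeter (hn : 4 < n) (i j k : Fin n) :
    xTilde n G i j + xTilde n G i k + xTilde n G j k ≤ 2 := by
  have hM := three_mul_rhoMax_sub_le_cConst_mul (G := G) hn
  have hD := two_mul_xTilde_denom (G := G) (by omega)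
  have hc : cConst n G * (1 - 4 / n) + 3 * cConst n G = 4 * cConst n G * (1 - 1 / n) := by ring
  have hij : (G.dist i j : ℝ) ≤ rhoMax G := by exact_mod_cast dist_le_rhoMax G i j
  have hik : (G.dist i k : ℝ) ≤ rhoMax G := by exact_mod_cast dist_le_rhoMax G i k
  have hjk : (G.dist j k : ℝ) ≤ rhoMax G := by exact_mod_cast dist_le_rhoMax G j k
  simp only [xTilde, ← add_div]
  refine div_le_of_le_mul₀ xTilde_denom_nonneg zero_le_two ?_
  linarith

lemma pairSum_xTilde (hG : G.Connected) (hn : 2 ≤ n) :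
    pairSum n (xTilde n G) = (n : ℝ) ^ 2 / 4 := by
  have hS : 0 < pairSum n (fun k l => (G.dist k l : ℝ) + cConst n G) := by
    refine pairSum_pos (fun _ _ => by positivity [cConst_nonneg (G := G)])
      (i := ⟨0, by omega⟩) (j := ⟨1, by omega⟩) (Fin.mk_lt_mk.mpr zero_lt_one) ?_
    have h01 : 0 < G.dist ⟨0, by omega⟩ ⟨1, by omega⟩ := hG.pos_dist_of_ne (by simp)
    have : (1 : ℝ) ≤ G.dist ⟨0, by omega⟩ ⟨1, by omega⟩ := by exact_mod_cast h01
    linarith [cConst_nonneg (G := G)]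
  have hn0 : (n : ℝ) ≠ 0 := by positivity
  unfold xTilde
  rw [pairSum_div]
  field_simp

end xTilde

/-- Let `G` be a connected graph on `n ≥ 5` nodes.  Then the point
`x̃` satisfies the triangle inequalities, the perimeter inequalities, and the
equipartition equality constraint, i.e. it is a feasible point of the metric LP
relaxation (LP-P). -/
theorem xTilde_feasible (n : ℕ) (hn5 : 5 ≤ n)
    (G : SimpleGraph (Fin n)) (hconn : G.Connected) :
    (∀ i j k : Fin n, i ≠ j → i ≠ k → j ≠ k →
        xTilde n G i j ≤ xTilde n G i k + xTilde n G j k) ∧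
    (∀ i j k : Fin n, i < j → j < k →
        xTilde n G i j + xTilde n G i k + xTilde n G j k ≤ 2) ∧
    pairSum n (xTilde n G) = (n : ℝ) ^ 2 / 4 :=
  ⟨fun i j k _ _ _ => xTilde_triangle hconn i j k,
    fun i j k _ _ => xTilde_perimeter (by omega) i j k,
    pairSum_xTilde hconn (by omega)⟩
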